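/- arXiv:1703.00745 — 2 statements merged into one kernel-verified Lean document; each statement's English description precedes it below -/
import Mathlib

section
/- For every subset T ⊆ Fin n of cardinality m, the L-subspace V_T = { f : Fin n → L | ∀ k ∈ T, Σ_{j=0}^{n-1} f(j)·σ^{k+j}(α) = 0 } of L^n has dimension n − m over L. -/
/-- The fixed subfield `L^σ` of a field automorphism `σ`. -/
def fixedSubfield {L : Type*} [Field L] (σ : L ≃+* L) : Subfield L where
  carrier := {x | σ x = x}
  mul_mem' := by intro a b ha hb; simp only [Set.mem_setOf_eq] at *; rw [map_mul, ha, hb]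
  one_mem' := by simp
  add_mem' := by intro a b ha hb; simp only [Set.mem_setOf_eq] at *; rw [map_add, ha, hb]
  zero_mem' := by simp
  neg_mem' := by intro a ha; simp only [Set.mem_setOf_eq] at *; rw [map_neg, ha]
  inv_mem' := by intro a ha; simp only [Set.mem_setOf_eq] at *; rw [map_inv₀, ha]

/-- For a subset `T ⊆ Fin n`, the `L`-subspace of `L^n` of all `f` with
`∑ j, f j · σ^{k+j}(α) = 0` for every `k ∈ T`. -/
def VT {L : Type*} [Field L] {n : ℕ} (σ : L ≃+* L) (α : L) (T : Finset (Fin n)) :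
    Submodule L (Fin n → L) where
  carrier := {f | ∀ k ∈ T, ∑ j : Fin n, f j * (σ ^ ((k : ℕ) + (j : ℕ))) α = 0}
  add_mem' := by
    intro f g hf hg k hk
    simp only [Pi.add_apply, add_mul, Finset.sum_add_distrib]
    rw [hf k hk, hg k hk, add_zero]
  zero_mem' := by intro k hk; simp
  smul_mem' := by
    intro c f hf k hk
    simp only [Pi.smul_apply, smul_eq_mul, mul_assoc]
    rw [← Finset.mul_sum, hf k hk, mul_zero]

/-! `V_T` is the kernel of `f ↦ (A f)|_T` for the matrix `A k j = σ^(k+j) α = σ^k (σ^j α)`, so it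
suffices that `A` is invertible. A linear relation `∑ c_k σ^k (b j) = 0` among its rows is linear
over the fixed field in `b j`, hence `∑ c_k σ^k` vanishes on all of `L`, and Dedekind's independence
of characters forces `c = 0`. -/

open Module

section FixedField

variable {L : Type*} [Field L] (σ : L ≃+* L)

theorem pow_apply_eq_self_of_mem_fixedSubfield {x : L} (hx : x ∈ fixedSubfield σ) (k : ℕ) :
    (σ ^ k) x = x := by
  rw [RingAut.coe_pow]
  exact Function.IsFixedPt.iterate hx k

theorem linearIndependent_coe_pow :
    LinearIndependent L (fun k : Fin (orderOf σ) => ⇑(σ ^ (k : ℕ))) := by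
  have hinj : Function.Injective fun k : Fin (orderOf σ) => ((σ ^ (k : ℕ) : L ≃+* L) : L →* L) :=
    fun k k' h => by
      have : σ ^ (k : ℕ) = σ ^ (k' : ℕ) := RingEquiv.ext fun x => DFunLike.congr_fun h x
      exact Fin.ext (pow_injOn_Iio_orderOf k.2 k'.2 this)
  exact (linearIndependent_monoidHom L L).comp _ hinj

theorem sum_mul_pow_apply_eq_zero_of_basis {ι : Type*} (b : Basis ι (fixedSubfield σ) L) {N : ℕ}
    (c : Fin N → L) (h : ∀ i, ∑ k, c k * (σ ^ (k : ℕ)) (b i) = 0) (x : L) :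
    ∑ k, c k * (σ ^ (k : ℕ)) x = 0 := by
  let φ : L →ₗ[fixedSubfield σ] L :=
    { toFun := fun x => ∑ k, c k * (σ ^ (k : ℕ)) x
      map_add' := fun x y => by simp only [map_add, mul_add, Finset.sum_add_distrib]
      map_smul' := fun r x => by
        simp only [Subfield.smul_def, smul_eq_mul, map_mul, RingHom.id_apply,
          pow_apply_eq_self_of_mem_fixedSubfield σ r.2, Finset.mul_sum]
        exact Finset.sum_congr rfl fun _ _ => by ring }
  exact LinearMap.congr_fun (b.ext (f₁ := φ) (f₂ := 0) h) x

theorem linearIndependent_pow_apply_basis {ι : Type*} (b : Basis ι (fixedSubfield σ) L) :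
    LinearIndependent L fun (k : Fin (orderOf σ)) (i : ι) => (σ ^ (k : ℕ)) (b i) := by
  rw [Fintype.linearIndependent_iff]
  intro c hc
  refine Fintype.linearIndependent_iff.1 (linearIndependent_coe_pow σ) c (funext fun x => ?_)
  simpa using sum_mul_pow_apply_eq_zero_of_basis σ b c (fun i => by simpa using congrFun hc i) x

end FixedField

theorem Matrix.finrank_ker_funLeft_comp_mulVecLin {K ι : Type*} [Field K] [Fintype ι]
    [DecidableEq ι] {A : Matrix ι ι K} (hA : IsUnit A) (T : Finset ι) :
    finrank K (LinearMap.ker ((LinearMap.funLeft K K ((↑) : T → ι)).comp A.mulVecLin)) =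
      Fintype.card ι - T.card := by
  set Φ := (LinearMap.funLeft K K ((↑) : T → ι)).comp A.mulVecLin
  have hΦ : Function.Surjective Φ :=
    (LinearMap.funLeft_surjective_of_injective K K _ Subtype.val_injective).comp
      (Matrix.mulVec_surjective_iff_isUnit.2 hA)
  have := LinearMap.finrank_range_add_finrank_ker Φ
  rw [LinearMap.range_eq_top.2 hΦ, finrank_top] at this
  simp only [finrank_fintype_fun_eq_card, Fintype.card_coe] at this
  omega

theorem finrank_VT_general {L : Type*} [Field L] {n : ℕ}
    (σ : L ≃+* L) (hord : orderOf σ = n) (α : L)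
    (b : Module.Basis (Fin n) (fixedSubfield σ) L)
    (hb : ∀ i : Fin n, (b i : L) = (σ ^ (i : ℕ)) α)
    (T : Finset (Fin n)) (m : ℕ) (hT : T.card = m) :
    Module.finrank L ↥(VT σ α T) = n - m := by
  subst hord hT
  let A : Matrix (Fin (orderOf σ)) (Fin (orderOf σ)) L :=
    Matrix.of fun k j => (σ ^ ((k : ℕ) + (j : ℕ))) α
  have hA : A.row = fun (k j : Fin (orderOf σ)) => (σ ^ (k : ℕ)) (b j) := by
    ext k j
    simp [A, hb, pow_add]
  have hVT : VT σ α T =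
      LinearMap.ker ((LinearMap.funLeft L L ((↑) : T → _)).comp A.mulVecLin) := by
    ext f
    simp [VT, A, funext_iff, Matrix.mulVec, dotProduct, mul_comm]
  rw [hVT, Matrix.finrank_ker_funLeft_comp_mulVecLin, Fintype.card_fin]
  exact Matrix.linearIndependent_rows_iff_isUnit.1 (hA ▸ linearIndependent_pow_apply_basis σ b)

/-- Let `α ∈ L` generate a normal basis of `L` over the fixed field `L^σ` of an
automorphism `σ` of order `n ≥ 1`. For every subset `T ⊆ Fin n` of cardinality `m`,
the subspace `V_T ≤ L^n` has `L`-dimension `n − m`. -/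
theorem finrank_VT {L : Type*} [Field L] {n : ℕ} (hn : 1 ≤ n)
    (σ : L ≃+* L) (hord : orderOf σ = n) (α : L)
    (b : Module.Basis (Fin n) (fixedSubfield σ) L)
    (hb : ∀ i : Fin n, (b i : L) = (σ ^ (i : ℕ)) α)
    (T : Finset (Fin n)) (m : ℕ) (hT : T.card = m) :
    Module.finrank L ↥(VT σ α T) = n - m :=
  finrank_VT_general σ hord α b hb T m hT
end

section
/- Let k : Fin ν → Fin n be injective, e : Fin ν → L, and let t be a natural number with ν ≤ t and t + 1 ≤ n. Let Σ be the n × ν matrix with entries Σ(i,j) = σ^{k(j)+i}(α) (i ∈ Fin n, j ∈ Fin ν), let Σ^t be its submatrix consisting of the first t+1 rows, and for r ≤ t let E^r be the ν × r matrix with entries E^r(i,j) = (σ⁻¹)^j(e(i)). Then rank(Σ·E^r) = rank(E^r) = rank(Σ^t·E^r). -/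
/-!
Both products are `Σ' * Eʳ` with `Σ'` a σ-twisted Moore matrix `(σ^i (x_j))` of the family
`x_j = σ^{k j} α`, which is linearly independent over `L^σ` because it is part of the normal
basis. A Moore matrix of an `L^σ`-independent family with at least as many rows as columns has
`L`-independent columns: given a dependency normalised to have a coefficient `1`, subtracting its
`σ⁻¹`-twist yields a shorter dependency of the same kind, so by induction the coefficients are
`σ`-fixed, and the first row contradicts independence over `L^σ`. Left multiplication by a
matrix with independent columns preserves rank.
-/

open Matrix

theorem Matrix.rank_mul_eq_right_of_linearIndependent_col {R : Type*} [CommRing R]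
    {m n o : Type*} [Fintype n] [Fintype o] (A : Matrix m n R) (B : Matrix n o R)
    (hA : LinearIndependent R A.col) : (A * B).rank = B.rank := by
  rw [rank, rank, mulVecLin_mul, LinearMap.range_comp,
    ← (Submodule.equivMapOfInjective A.mulVecLin (mulVec_injective_iff.mpr hA) _).finrank_eq]

section Moore

variable {L : Type*} [Field L] (σ : L ≃+* L) {ι : Type*}

def mooreMatrix (m : ℕ) (x : ι → L) : Matrix (Fin m) ι L :=
  of fun i j => (σ ^ (i : ℕ)) (x j)

theorem of_pow_add_apply_eq_mooreMatrix (m : ℕ) (a : ι → ℕ) (y : L) :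
    (of fun (i : Fin m) j => (σ ^ (a j + i)) y) = mooreMatrix σ m fun j => (σ ^ a j) y := by
  ext i j
  rw [mooreMatrix, of_apply, of_apply, add_comm, pow_add]
  rfl

theorem symm_sum_mul_pow_succ_apply (s : Finset ι) (c x : ι → L) (i : ℕ) :
    σ.symm (∑ j ∈ s, c j * (σ ^ (i + 1)) (x j)) = ∑ j ∈ s, σ.symm (c j) * (σ ^ i) (x j) := by
  simp only [map_sum, map_mul, pow_succ', RingAut.mul_apply, RingEquiv.symm_apply_apply]

theorem eq_zero_of_forall_sum_mul_pow_apply_eq_zero {x : ι → L}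
    (hx : LinearIndependent (fixedSubfield σ) x) (m : ℕ) (s : Finset ι) (hs : s.card ≤ m)
    (c : ι → L) (hc : ∀ i < m, ∑ j ∈ s, c j * (σ ^ i) (x j) = 0) : ∀ j ∈ s, c j = 0 := by
  induction m generalizing s c with
  | zero => simp_all
  | succ m ih =>
    classical
    intro j₁ hj₁
    by_contra hc₁
    set c' : ι → L := fun j => (c j₁)⁻¹ * c j
    have hc'₁ : c' j₁ = 1 := inv_mul_cancel₀ hc₁
    have hc' : ∀ i < m + 1, ∑ j ∈ s, c' j * (σ ^ i) (x j) = 0 := fun i hi => by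
      simp only [c', mul_assoc, ← Finset.mul_sum, hc i hi, mul_zero]
    -- `c' - σ⁻¹ c'` satisfies the first `m` equations and vanishes at `j₁`.
    have hfix : ∀ j ∈ s, σ (c' j) = c' j := by
      have hd := ih (s.erase j₁) (by rw [Finset.card_erase_of_mem hj₁]; omega)
        (fun j => c' j - σ.symm (c' j)) fun i hi => by
          rw [Finset.sum_erase _ (by simp [hc'₁])]
          simp only [sub_mul, Finset.sum_sub_distrib, ← symm_sum_mul_pow_succ_apply,
            hc' i (by omega), hc' (i + 1) (by omega), map_zero, sub_zero]
      intro j hj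
      by_cases hj₁ : j = j₁
      · rw [hj₁, hc'₁, map_one]
      · have := hd j (Finset.mem_erase.mpr ⟨hj₁, hj⟩)
        rw [sub_eq_zero] at this
        exact (congrArg σ this).trans (σ.apply_symm_apply _)
    have hrow := hc' 0 (by omega)
    simp only [pow_zero, RingAut.one_apply] at hrow
    have := Fintype.linearIndependent_iff.mp (hx.comp ((↑) : s → ι) Subtype.val_injective)
      (fun j => ⟨c' j, hfix j j.2⟩) ((Finset.sum_coe_sort s fun j => c' j * x j).trans hrow)
      ⟨j₁, hj₁⟩
    simp [Subtype.ext_iff, hc'₁] at this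

theorem linearIndependent_mooreMatrix_col [Fintype ι] {x : ι → L}
    (hx : LinearIndependent (fixedSubfield σ) x) {m : ℕ} (hm : Fintype.card ι ≤ m) :
    LinearIndependent L (mooreMatrix σ m x).col := by
  refine Fintype.linearIndependent_iff.mpr fun c hc j =>
    eq_zero_of_forall_sum_mul_pow_apply_eq_zero σ hx m Finset.univ hm c (fun i hi => ?_) j
      (Finset.mem_univ j)
  simpa [mooreMatrix] using congrFun hc ⟨i, hi⟩

end Moore

theorem rank_syndrome_matrices_general {L : Type*} [Field L] {n : ℕ}
    (σ : L ≃+* L) (α : L)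
    (b : Module.Basis (Fin n) (fixedSubfield σ) L)
    (hb : ∀ i : Fin n, (b i : L) = (σ ^ (i : ℕ)) α)
    (ν t : ℕ) (hνt : ν ≤ t) (htn : t + 1 ≤ n)
    (k : Fin ν → Fin n) (hk : Function.Injective k) (e : Fin ν → L)
    (r : ℕ) :
    ((Matrix.of fun (i : Fin n) (j : Fin ν) => (σ ^ ((k j : ℕ) + (i : ℕ))) α) *
        (Matrix.of fun (i : Fin ν) (j : Fin r) => (σ⁻¹ ^ (j : ℕ)) (e i))).rank =
      (Matrix.of fun (i : Fin ν) (j : Fin r) => (σ⁻¹ ^ (j : ℕ)) (e i)).rank ∧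
    (Matrix.of fun (i : Fin ν) (j : Fin r) => (σ⁻¹ ^ (j : ℕ)) (e i)).rank =
      ((Matrix.of fun (i : Fin (t + 1)) (j : Fin ν) => (σ ^ ((k j : ℕ) + (i : ℕ))) α) *
        (Matrix.of fun (i : Fin ν) (j : Fin r) => (σ⁻¹ ^ (j : ℕ)) (e i))).rank := by
  have hx : LinearIndependent (fixedSubfield σ) fun j => (σ ^ (k j : ℕ)) α := by
    simpa only [Function.comp_def, hb] using b.linearIndependent.comp k hk
  have hcols (m : ℕ) (hm : ν ≤ m) :
      LinearIndependent L (of fun (i : Fin m) j => (σ ^ ((k j : ℕ) + (i : ℕ))) α).col := by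
    rw [of_pow_add_apply_eq_mooreMatrix]
    exact linearIndependent_mooreMatrix_col σ hx (by simpa using hm)
  exact ⟨rank_mul_eq_right_of_linearIndependent_col _ _ (hcols n (by omega)),
    (rank_mul_eq_right_of_linearIndependent_col _ _ (hcols (t + 1) (by omega))).symm⟩

/-- Let `α ∈ L` generate a normal basis of `L` over the fixed field `L^σ` of an
automorphism `σ` of order `n ≥ 1`. Let `k : Fin ν → Fin n` be injective, `e : Fin ν → L`,
and `ν ≤ t`, `t + 1 ≤ n`. With `Σ` the `n × ν` matrix `(σ^{k(j)+i}(α))`, `Σᵗ` its first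
`t+1` rows, and `Eʳ` the `ν × r` matrix `((σ⁻¹)^j(e i))` for `r ≤ t`, one has
`rank(Σ·Eʳ) = rank(Eʳ) = rank(Σᵗ·Eʳ)`. -/
theorem rank_syndrome_matrices {L : Type*} [Field L] {n : ℕ} (hn : 1 ≤ n)
    (σ : L ≃+* L) (hord : orderOf σ = n) (α : L)
    (b : Module.Basis (Fin n) (fixedSubfield σ) L)
    (hb : ∀ i : Fin n, (b i : L) = (σ ^ (i : ℕ)) α)
    (ν t : ℕ) (hνt : ν ≤ t) (htn : t + 1 ≤ n)
    (k : Fin ν → Fin n) (hk : Function.Injective k) (e : Fin ν → L)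
    (r : ℕ) (hr : r ≤ t) :
    ((Matrix.of fun (i : Fin n) (j : Fin ν) => (σ ^ ((k j : ℕ) + (i : ℕ))) α) *
        (Matrix.of fun (i : Fin ν) (j : Fin r) => (σ⁻¹ ^ (j : ℕ)) (e i))).rank =
      (Matrix.of fun (i : Fin ν) (j : Fin r) => (σ⁻¹ ^ (j : ℕ)) (e i)).rank ∧
    (Matrix.of fun (i : Fin ν) (j : Fin r) => (σ⁻¹ ^ (j : ℕ)) (e i)).rank =
      ((Matrix.of fun (i : Fin (t + 1)) (j : Fin ν) => (σ ^ ((k j : ℕ) + (i : ℕ))) α) *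
        (Matrix.of fun (i : Fin ν) (j : Fin r) => (σ⁻¹ ^ (j : ℕ)) (e i))).rank :=
  rank_syndrome_matrices_general σ α b hb ν t hνt htn k hk e r
end
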